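/- Let A be positive semidefinite and T an operator admitting an A-adjoint T^♯. Then dw_A(T)² ≤ sup_{θ∈ℝ} w_A(e^{iθ}T + T^♯T)² − 2·c_A(T)·m_A(T)², where m_A(T) = inf{‖Tx‖_A : ‖x‖_A = 1}. -/

import Mathlib

noncomputable section

namespace DW

variable {H : Type*} [NormedAddCommGroup H] [InnerProductSpace ℂ H]

/-- The semi-inner product induced by `A`: `⟨x,y⟩_A = ⟨Ax, y⟩`. -/
def innA (A : H →L[ℂ] H) (x y : H) : ℂ := inner ℂ (A x) y

/-- The seminorm induced by `A`. -/
def normA (A : H →L[ℂ] H) (x : H) : ℝ := Real.sqrt (innA A x x).re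

/-- `T` is `A`-bounded. -/
def IsABounded (A T : H →L[ℂ] H) : Prop := ∃ c > 0, ∀ x, normA A (T x) ≤ c * normA A x

/-- `S` is an `A`-adjoint of `T`. -/
def IsAAdjointPair (A T S : H →L[ℂ] H) : Prop := ∀ x y, innA A (T x) y = innA A x (S y)

/-- The `A`-operator seminorm. -/
def opNormA (A T : H →L[ℂ] H) : ℝ := sSup {r | ∃ x, normA A x = 1 ∧ r = normA A (T x)}

/-- The `A`-minimum modulus. -/
def mA (A T : H →L[ℂ] H) : ℝ := sInf {r | ∃ x, normA A x = 1 ∧ r = normA A (T x)}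

/-- The `A`-numerical radius. -/
def wA (A T : H →L[ℂ] H) : ℝ :=
  sSup {r | ∃ x, normA A x = 1 ∧ r = ‖innA A (T x) x‖}

/-- The `A`-Crawford number. -/
def cA (A T : H →L[ℂ] H) : ℝ :=
  sInf {r | ∃ x, normA A x = 1 ∧ r = ‖innA A (T x) x‖}

/-- The `A`-Davis-Wielandt radius. -/
def dwA (A T : H →L[ℂ] H) : ℝ :=
  sSup {r | ∃ x, normA A x = 1 ∧
    r = Real.sqrt (‖innA A (T x) x‖ ^ 2 + normA A (T x) ^ 4)}

/-- The semi-inner product on `H ⊕ H` induced by `𝔸 = diag(A,A)`. -/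
def innA2 (A : H →L[ℂ] H) (z w : H × H) : ℂ := innA A z.1 w.1 + innA A z.2 w.2

/-- The seminorm on `H ⊕ H` induced by `𝔸 = diag(A,A)`. -/
def normA2 (A : H →L[ℂ] H) (z : H × H) : ℝ := Real.sqrt (innA2 A z z).re

/-- The `𝔸`-numerical radius on `H ⊕ H`, `𝔸 = diag(A,A)`. -/
def wA2 (A : H →L[ℂ] H) (T : H × H →L[ℂ] H × H) : ℝ :=
  sSup {r | ∃ z, normA2 A z = 1 ∧ r = ‖innA2 A (T z) z‖}

/-- The `𝔸`-Davis-Wielandt radius on `H ⊕ H`, `𝔸 = diag(A,A)`. -/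
def dwA2 (A : H →L[ℂ] H) (T : H × H →L[ℂ] H × H) : ℝ :=
  sSup {r | ∃ z, normA2 A z = 1 ∧
    r = Real.sqrt (‖innA2 A (T z) z‖ ^ 2 + normA2 A (T z) ^ 4)}

/-- The block operator `[[0, X], [Y, 0]]` on `H ⊕ H`. -/
def offDiag (X Y : H →L[ℂ] H) : H × H →L[ℂ] H × H :=
  (X.comp (ContinuousLinearMap.snd ℂ H H)).prod (Y.comp (ContinuousLinearMap.fst ℂ H H))

end DW

/-! For an `A`-unit vector `x`, rotating by `θ = arg ⟨Tx, x⟩_A` makes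
`⟨(e^{iθ} T + T^♯ T) x, x⟩_A = |⟨Tx, x⟩_A| + ‖Tx‖_A²`, and
`|⟨Tx, x⟩_A|² + ‖Tx‖_A⁴ = (|⟨Tx, x⟩_A| + ‖Tx‖_A²)² - 2 |⟨Tx, x⟩_A| ‖Tx‖_A²`;
the first term is at most `w_A(e^{iθ} T + T^♯ T)²` and the second at least `2 c_A(T) m_A(T)²`.
All suprema involved are finite because `‖Tx‖_A² ≤ ‖T^♯ T‖` on the `A`-unit sphere, which follows
from `‖Sx‖_A^{2^k} ≤ ‖S^{2^k} x‖_A` for the `A`-selfadjoint operator `S = T^♯ T`. -/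

open ComplexConjugate

lemma Complex.conj_exp_arg_mul_I_mul (z : ℂ) :
    conj (Complex.exp (z.arg * Complex.I)) * z = ‖z‖ := by
  nth_rw 2 [← Complex.norm_mul_exp_arg_mul_I z]
  rw [mul_left_comm, Complex.conj_mul', Complex.norm_exp_ofReal_mul_I]
  simp

lemma le_of_forall_pow_two_pow_le_mul {a b C : ℝ} (hb : 0 ≤ b)
    (h : ∀ k : ℕ, a ^ 2 ^ k ≤ C * b ^ 2 ^ k) : a ≤ b := by
  by_contra! hba
  rcases hb.eq_or_lt with rfl | hb
  · have := h 0
    norm_num at this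
    linarith
  · have hq : 1 < a / b := (one_lt_div hb).mpr hba
    obtain ⟨n, hn⟩ := pow_unbounded_of_one_lt C hq
    have : (a / b) ^ 2 ^ n ≤ C := by
      rw [div_pow, div_le_iff₀ (pow_pos hb _)]
      exact h n
    linarith [pow_le_pow_right₀ hq.le (Nat.lt_two_pow_self (n := n)).le]

namespace DW

variable {H : Type*} [NormedAddCommGroup H] [InnerProductSpace ℂ H] {A S S' T T' : H →L[ℂ] H}

lemma innA_conj_symm (hA : A.IsPositive) (x y : H) : conj (innA A x y) = innA A y x := by
  rw [innA, inner_conj_symm]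
  exact (hA.isSymmetric y x).symm

lemma norm_innA_le (hA : A.IsPositive) (x y : H) : ‖innA A x y‖ ≤ normA A x * normA A y :=
  let core : PreInnerProductSpace.Core ℂ H :=
    { inner := innA A
      conj_inner_symm x y := innA_conj_symm hA y x
      re_inner_nonneg := hA.2
      add_left x y z := by simp [innA]
      smul_left x y r := by simp [innA, mul_comm] }
  @InnerProductSpace.Core.norm_inner_le_norm ℂ H _ _ _ core x y

lemma normA_nonneg (x : H) : 0 ≤ normA A x := Real.sqrt_nonneg _

lemma normA_sq (hA : A.IsPositive) (x : H) : normA A x ^ 2 = (innA A x x).re :=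
  Real.sq_sqrt (hA.2 x)

lemma innA_self (hA : A.IsPositive) (x : H) : innA A x x = (normA A x ^ 2 : ℝ) := by
  rw [normA_sq hA, (Complex.conj_eq_iff_re).mp (innA_conj_symm hA x x)]

lemma normA_le (y : H) : normA A y ≤ √‖A‖ * ‖y‖ := by
  have : (innA A y y).re ≤ ‖A‖ * ‖y‖ ^ 2 :=
    calc (innA A y y).re ≤ ‖A y‖ * ‖y‖ := (Complex.re_le_norm _).trans (norm_inner_le_norm _ _)
      _ ≤ ‖A‖ * ‖y‖ * ‖y‖ := by gcongr; exact A.le_opNorm y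
      _ = ‖A‖ * ‖y‖ ^ 2 := by ring
  calc normA A y ≤ √(‖A‖ * ‖y‖ ^ 2) := Real.sqrt_le_sqrt this
    _ = √‖A‖ * ‖y‖ := by rw [Real.sqrt_mul (norm_nonneg A), Real.sqrt_sq (norm_nonneg y)]

lemma innA_smul_add_apply (c : ℂ) (T S : H →L[ℂ] H) (x y : H) :
    innA A ((c • T + S) x) y = conj c * innA A (T x) y + innA A (S x) y := by
  simp [innA, mul_comm]

lemma norm_innA_le_wA {M : ℝ} (hM : ∀ x, normA A x = 1 → ‖innA A (T x) x‖ ≤ M) {x : H}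
    (hx : normA A x = 1) : ‖innA A (T x) x‖ ≤ wA A T :=
  le_csSup ⟨M, by rintro _ ⟨y, hy, rfl⟩; exact hM y hy⟩ ⟨x, hx, rfl⟩

lemma wA_le {M : ℝ} (hM : ∀ x, normA A x = 1 → ‖innA A (T x) x‖ ≤ M) (hM0 : 0 ≤ M) :
    wA A T ≤ M :=
  Real.sSup_le (by rintro _ ⟨y, hy, rfl⟩; exact hM y hy) hM0

lemma wA_nonneg : 0 ≤ wA A T :=
  Real.sSup_nonneg (by rintro _ ⟨y, -, rfl⟩; positivity)

lemma cA_le {x : H} (hx : normA A x = 1) : cA A T ≤ ‖innA A (T x) x‖ :=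
  csInf_le ⟨0, by rintro _ ⟨y, -, rfl⟩; positivity⟩ ⟨x, hx, rfl⟩

lemma cA_eq_zero_of_forall_normA_ne_one (h : ∀ x, normA A x ≠ 1) : cA A T = 0 := by
  simp [cA, h]

lemma mA_le {x : H} (hx : normA A x = 1) : mA A T ≤ normA A (T x) :=
  csInf_le ⟨0, by rintro _ ⟨y, -, rfl⟩; exact normA_nonneg _⟩ ⟨x, hx, rfl⟩

lemma mA_nonneg : 0 ≤ mA A T :=
  Real.sInf_nonneg (by rintro _ ⟨y, -, rfl⟩; exact normA_nonneg _)

lemma dwA_sq_le {M : ℝ}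
    (hM : ∀ x, normA A x = 1 → ‖innA A (T x) x‖ ^ 2 + normA A (T x) ^ 4 ≤ M) (hM0 : 0 ≤ M) :
    dwA A T ^ 2 ≤ M := by
  refine (Real.le_sqrt (Real.sSup_nonneg ?_) hM0).mp (Real.sSup_le ?_ (Real.sqrt_nonneg M))
  · rintro _ ⟨y, -, rfl⟩; positivity
  · rintro _ ⟨y, hy, rfl⟩; exact Real.sqrt_le_sqrt (hM y hy)

namespace IsAAdjointPair

lemma symm (hA : A.IsPositive) (h : IsAAdjointPair A T T') : IsAAdjointPair A T' T := fun x y => by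
  rw [← innA_conj_symm hA y, ← h, innA_conj_symm hA]

lemma comp (h : IsAAdjointPair A T T') (h' : IsAAdjointPair A S S') :
    IsAAdjointPair A (S.comp T) (T'.comp S') := fun x y => by
  simp only [ContinuousLinearMap.comp_apply, h' (T x), h x]

lemma pow (h : IsAAdjointPair A S S) (n : ℕ) : IsAAdjointPair A (S ^ n) (S ^ n) := by
  induction n with
  | zero => exact fun x y => rfl
  | succ n ih =>
    simpa only [← ContinuousLinearMap.mul_def, ← pow_succ, ← pow_succ'] using h.comp ih

lemma normA_apply_sq_le (hA : A.IsPositive) (h : IsAAdjointPair A T T') (x : H) :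
    normA A (T x) ^ 2 ≤ normA A x * normA A (T' (T x)) :=
  calc normA A (T x) ^ 2 = (innA A x (T' (T x))).re := by rw [normA_sq hA, h]
    _ ≤ ‖innA A x (T' (T x))‖ := Complex.re_le_norm _
    _ ≤ normA A x * normA A (T' (T x)) := norm_innA_le hA _ _

lemma normA_apply_pow_two_pow_le (hA : A.IsPositive) (h : IsAAdjointPair A S S) {x : H}
    (hx : normA A x = 1) (k : ℕ) : normA A (S x) ^ 2 ^ k ≤ normA A ((S ^ 2 ^ k) x) := by
  induction k with
  | zero => simp
  | succ k ih =>
    calc normA A (S x) ^ 2 ^ (k + 1) = (normA A (S x) ^ 2 ^ k) ^ 2 := by rw [pow_succ, pow_mul]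
      _ ≤ normA A ((S ^ 2 ^ k) x) ^ 2 := pow_le_pow_left₀ (pow_nonneg (normA_nonneg _) _) ih 2
      _ ≤ normA A ((S ^ 2 ^ (k + 1)) x) := by
        simpa [hx, pow_succ, mul_two, pow_add] using (h.pow (2 ^ k)).normA_apply_sq_le hA x

lemma normA_apply_le_opNorm (hA : A.IsPositive) (h : IsAAdjointPair A S S) {x : H}
    (hx : normA A x = 1) : normA A (S x) ≤ ‖S‖ := by
  refine le_of_forall_pow_two_pow_le_mul (C := √‖A‖ * ‖x‖) (norm_nonneg S) fun k => ?_
  calc normA A (S x) ^ 2 ^ k ≤ normA A ((S ^ 2 ^ k) x) := h.normA_apply_pow_two_pow_le hA hx k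
    _ ≤ √‖A‖ * ‖(S ^ 2 ^ k) x‖ := normA_le _
    _ ≤ √‖A‖ * (‖S‖ ^ 2 ^ k * ‖x‖) := by
      gcongr
      exact ((S ^ 2 ^ k).le_opNorm x).trans (by gcongr; exact norm_pow_le' S (by positivity))
    _ = √‖A‖ * ‖x‖ * ‖S‖ ^ 2 ^ k := by ring

lemma normA_apply_sq_le_opNorm_comp (hA : A.IsPositive) (h : IsAAdjointPair A T T') {x : H}
    (hx : normA A x = 1) : normA A (T x) ^ 2 ≤ ‖T'.comp T‖ :=
  calc normA A (T x) ^ 2 ≤ normA A (T' (T x)) := by simpa [hx] using h.normA_apply_sq_le hA x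
    _ ≤ ‖T'.comp T‖ := (h.comp (h.symm hA)).normA_apply_le_opNorm hA hx

lemma innA_comp_apply_self (hA : A.IsPositive) (h : IsAAdjointPair A T T') (x : H) :
    innA A ((T'.comp T) x) x = (normA A (T x) ^ 2 : ℝ) := by
  rw [ContinuousLinearMap.comp_apply, h.symm hA, innA_self hA]

lemma norm_innA_rotate_le (hA : A.IsPositive) (h : IsAAdjointPair A T T') (θ : ℝ) (x : H) :
    ‖innA A ((Complex.exp (θ * Complex.I) • T + T'.comp T) x) x‖ ≤
      ‖innA A (T x) x‖ + normA A (T x) ^ 2 := by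
  rw [innA_smul_add_apply, h.innA_comp_apply_self hA]
  refine (norm_add_le _ _).trans_eq ?_
  simp [Complex.norm_exp_ofReal_mul_I]

lemma exists_norm_innA_rotate_eq (hA : A.IsPositive) (h : IsAAdjointPair A T T') (x : H) :
    ∃ θ : ℝ, ‖innA A ((Complex.exp (θ * Complex.I) • T + T'.comp T) x) x‖ =
      ‖innA A (T x) x‖ + normA A (T x) ^ 2 := by
  refine ⟨(innA A (T x) x).arg, ?_⟩
  rw [innA_smul_add_apply, h.innA_comp_apply_self hA, Complex.conj_exp_arg_mul_I_mul,
    ← Complex.ofReal_add, Complex.norm_real, Real.norm_of_nonneg (by positivity)]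

lemma norm_innA_rotate_le_of_normA_eq_one (hA : A.IsPositive) (h : IsAAdjointPair A T T')
    (θ : ℝ) {x : H} (hx : normA A x = 1) :
    ‖innA A ((Complex.exp (θ * Complex.I) • T + T'.comp T) x) x‖ ≤ √‖T'.comp T‖ + ‖T'.comp T‖ := by
  have hTx := h.normA_apply_sq_le_opNorm_comp hA hx
  refine (h.norm_innA_rotate_le hA θ x).trans (add_le_add ?_ hTx)
  calc ‖innA A (T x) x‖ ≤ normA A (T x) := by simpa [hx] using norm_innA_le hA (T x) x
    _ ≤ √‖T'.comp T‖ := Real.le_sqrt_of_sq_le hTx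

lemma sq_wA_rotate_le_sSup (hA : A.IsPositive) (h : IsAAdjointPair A T T') (θ : ℝ) :
    wA A (Complex.exp (θ * Complex.I) • T + T'.comp T) ^ 2 ≤
      sSup {r : ℝ | ∃ θ : ℝ, r = wA A (Complex.exp (θ * Complex.I) • T + T'.comp T) ^ 2} := by
  refine le_csSup ⟨(√‖T'.comp T‖ + ‖T'.comp T‖) ^ 2, ?_⟩ ⟨θ, rfl⟩
  rintro _ ⟨φ, rfl⟩
  exact pow_le_pow_left₀ wA_nonneg
    (wA_le (fun _ => h.norm_innA_rotate_le_of_normA_eq_one hA φ) (by positivity)) 2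

lemma norm_innA_sq_add_normA_pow_four_le (hA : A.IsPositive) (h : IsAAdjointPair A T T') {x : H}
    (hx : normA A x = 1) :
    ‖innA A (T x) x‖ ^ 2 + normA A (T x) ^ 4 ≤
      sSup {r : ℝ | ∃ θ : ℝ, r = wA A (Complex.exp (θ * Complex.I) • T + T'.comp T) ^ 2}
        - 2 * cA A T * mA A T ^ 2 := by
  obtain ⟨θ, hθ⟩ := h.exists_norm_innA_rotate_eq hA x
  have hw : ‖innA A (T x) x‖ + normA A (T x) ^ 2 ≤
      wA A (Complex.exp (θ * Complex.I) • T + T'.comp T) :=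
    hθ ▸ norm_innA_le_wA (fun _ => h.norm_innA_rotate_le_of_normA_eq_one hA θ) hx
  have hcm : cA A T * mA A T ^ 2 ≤ ‖innA A (T x) x‖ * normA A (T x) ^ 2 :=
    mul_le_mul (cA_le hx) (pow_le_pow_left₀ mA_nonneg (mA_le hx) 2) (by positivity) (norm_nonneg _)
  have hw2 := (pow_le_pow_left₀ (by positivity) hw 2).trans (h.sq_wA_rotate_le_sSup hA θ)
  linarith

end IsAAdjointPair

end DW

open DW

variable {H : Type*} [NormedAddCommGroup H] [InnerProductSpace ℂ H] [CompleteSpace H]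

theorem stmt6 (A T T' : H →L[ℂ] H) (hA : A.IsPositive) (hT' : IsAAdjointPair A T T') :
    dwA A T ^ 2 ≤
      sSup {r : ℝ | ∃ θ : ℝ, r = wA A (Complex.exp (θ * Complex.I) • T + T'.comp T) ^ 2}
        - 2 * cA A T * mA A T ^ 2 := by
  have key := fun x (hx : normA A x = 1) => hT'.norm_innA_sq_add_normA_pow_four_le hA hx
  refine dwA_sq_le key ?_
  by_cases hsphere : ∃ x, normA A x = 1
  · obtain ⟨x, hx⟩ := hsphere
    exact le_trans (by positivity) (key x hx)
  · push Not at hsphere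
    rw [cA_eq_zero_of_forall_normA_ne_one hsphere, mul_zero, zero_mul, sub_zero]
    exact Real.sSup_nonneg (by rintro _ ⟨θ, rfl⟩; positivity)
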